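/- Assume Nelson's hypercontractive inequality: ‖N_t h‖_q ≤ ‖h‖_p in L^p(ℝ, e^{-πx²}dx) whenever (p−1) = e^{-2t}(q−1) with 1 < p < q. Then for every nonnegative h with ‖N_t h‖₁ = ‖h‖₁ one has (‖N_t h‖_q − ‖h‖₁)/(q−1) ≤ e^{-2t} (‖h‖_p − ‖h‖₁)/(p−1), and taking the limit p,q → 1 yields ∫ N_t h log N_t h e^{-πx²}dx ≤ e^{-2t} ∫ h log h e^{-πx²}dx + (1−e^{-2t})‖h‖₁ log ‖h‖₁, provided h is bounded. -/

import Mathlib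

/-! Nelson's inequality gives `‖N_t h‖_q - ‖h‖₁ ≤ ‖h‖_p - ‖h‖₁`, and dividing by
`q - 1 = e^{2t} (p - 1)` gives the difference-quotient inequality. For a bounded `g ≥ 0` the map
`p ↦ ∫ g^p dγ` can be differentiated under the integral sign at `p = 1` (its derivative `g^p log g`
is uniformly bounded for `p` near `1`), so the slope of `p ↦ ‖g‖_p` at `p = 1⁺` is
`∫ g log g dγ - ‖g‖₁ log ‖g‖₁`. Letting `p → 1⁺` on both sides, with `‖N_t h‖₁ = ‖h‖₁`, yields the
entropy inequality. -/

open MeasureTheory Real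

/-- The Ornstein–Uhlenbeck semigroup with invariant measure `e^{-πx²}dx`. -/
noncomputable def OUsemigroup (t : ℝ) (h : ℝ → ℝ) : ℝ → ℝ :=
  fun x => ∫ y : ℝ, h (Real.exp (-t) * x + Real.sqrt (1 - Real.exp (-2 * t)) * y) *
    Real.exp (-π * y ^ 2)

/-- The `L^p(ℝ, e^{-πx²}dx)` norm of a nonnegative function. -/
noncomputable def gaussLpNorm (h : ℝ → ℝ) (p : ℝ) : ℝ :=
  (∫ x : ℝ, (h x) ^ p * Real.exp (-π * x ^ 2)) ^ (1 / p)

/-- The `L¹(ℝ, e^{-πx²}dx)` norm of a nonnegative function. -/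
noncomputable def gaussL1Norm (h : ℝ → ℝ) : ℝ :=
  ∫ x : ℝ, h x * Real.exp (-π * x ^ 2)

open Filter Topology

namespace Real

lemma hasDerivAt_const_rpow_of_nonneg {a p : ℝ} (ha : 0 ≤ a) (hp : 0 < p) :
    HasDerivAt (fun q => a ^ q) (a ^ p * log a) p := by
  rcases ha.eq_or_lt with rfl | ha
  · have hzero : (fun q : ℝ => (0 : ℝ) ^ q) =ᶠ[𝓝 p] fun _ => 0 := by
      filter_upwards [eventually_gt_nhds hp] with q hq
      exact zero_rpow hq.ne'
    simpa using (hasDerivAt_const p (0 : ℝ)).congr_of_eventuallyEq hzero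
  · exact (hasStrictDerivAt_const_rpow ha p).hasDerivAt

lemma abs_rpow_mul_log_le {a M p : ℝ} (ha : 0 ≤ a) (haM : a ≤ M) (hp : 1 / 2 ≤ p)
    (hp' : p ≤ 2) : |a ^ p * log a| ≤ 2 + M ^ 3 := by
  have hM : 0 ≤ M := ha.trans haM
  rcases le_total a 1 with ha1 | ha1
  · rcases ha.eq_or_lt with rfl | ha0
    · rw [zero_rpow (by linarith), zero_mul, abs_zero]
      positivity
    have hsqrt : |log a * a ^ (1 / 2 : ℝ)| < 2 := by
      simpa using abs_log_mul_self_rpow_lt a (1 / 2) ha0 ha1 (by norm_num)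
    calc |a ^ p * log a| = a ^ p * |log a| := by
          rw [abs_mul, abs_of_nonneg (rpow_nonneg ha p)]
      _ ≤ a ^ (1 / 2 : ℝ) * |log a| :=
          mul_le_mul_of_nonneg_right (rpow_le_rpow_of_exponent_ge ha0 ha1 hp) (abs_nonneg _)
      _ ≤ 2 + M ^ 3 := by
          rw [abs_mul, abs_of_nonneg (rpow_nonneg ha _)] at hsqrt
          nlinarith [pow_nonneg hM 3]
  · have hlog : 0 ≤ log a := log_nonneg ha1
    calc |a ^ p * log a| = a ^ p * log a := abs_of_nonneg (by positivity)
      _ ≤ a ^ (2 : ℝ) * a := by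
          gcongr
          linarith [log_le_sub_one_of_pos (by linarith : 0 < a)]
      _ ≤ 2 + M ^ 3 := by
          rw [rpow_two]
          nlinarith [pow_le_pow_left₀ ha haM 3]

end Real

section RpowIntegral

variable {α : Type*} [MeasurableSpace α] {μ : Measure α} [IsFiniteMeasure μ] {g : α → ℝ} {C : ℝ}

lemma hasDerivAt_integral_rpow_at_one (hg0 : ∀ x, 0 ≤ g x) (hgm : Measurable g)
    (hgC : ∀ x, g x ≤ C) :
    HasDerivAt (fun p : ℝ => ∫ x, g x ^ p ∂μ) (∫ x, g x * log (g x) ∂μ) 1 := by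
  have hball : ∀ p ∈ Metric.ball (1 : ℝ) (1 / 2), 1 / 2 ≤ p ∧ p ≤ 2 := fun p hp => by
    rw [Real.ball_eq_Ioo] at hp; constructor <;> linarith [hp.1, hp.2]
  have key := hasDerivAt_integral_of_dominated_loc_of_deriv_le (μ := μ)
    (F := fun (p : ℝ) x => g x ^ p) (F' := fun p x => g x ^ p * log (g x))
    (bound := fun _ => 2 + C ^ 3) (Metric.ball_mem_nhds 1 (by norm_num : (0 : ℝ) < 1 / 2))
    (Eventually.of_forall fun p => (hgm.pow_const p).aestronglyMeasurable)
    (Integrable.of_bound (hgm.pow_const 1).aestronglyMeasurable C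
      (Eventually.of_forall fun x => by simpa [abs_of_nonneg (hg0 x)] using hgC x))
    ((hgm.pow_const 1).mul (measurable_log.comp hgm)).aestronglyMeasurable
    (Eventually.of_forall fun x p hp =>
      abs_rpow_mul_log_le (hg0 x) (hgC x) (hball p hp).1 (hball p hp).2)
    (integrable_const _)
    (Eventually.of_forall fun x p hp =>
      hasDerivAt_const_rpow_of_nonneg (hg0 x) (by linarith [(hball p hp).1]))
  simpa using key.2

lemma tendsto_slope_rpow_integral_of_pos (hg0 : ∀ x, 0 ≤ g x) (hgm : Measurable g)
    (hgC : ∀ x, g x ≤ C) (hpos : 0 < ∫ x, g x ∂μ) :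
    Tendsto (fun p => ((∫ x, g x ^ p ∂μ) ^ (1 / p) - ∫ x, g x ∂μ) / (p - 1)) (𝓝[>] 1)
      (𝓝 (∫ x, g x * log (g x) ∂μ - (∫ x, g x ∂μ) * log (∫ x, g x ∂μ))) := by
  have hF1 : ∫ x, g x ^ (1 : ℝ) ∂μ = ∫ x, g x ∂μ := by simp
  have hinv : HasDerivAt (fun p : ℝ => 1 / p) (-1) 1 := by
    simpa using hasDerivAt_inv (one_ne_zero (α := ℝ))
  have hderiv : HasDerivAt (fun p : ℝ => (∫ x, g x ^ p ∂μ) ^ (1 / p))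
      (∫ x, g x * log (g x) ∂μ - (∫ x, g x ∂μ) * log (∫ x, g x ∂μ)) 1 := by
    convert (hasDerivAt_integral_rpow_at_one (μ := μ) hg0 hgm hgC).rpow hinv (hF1 ▸ hpos) using 1
    simp only [div_one, sub_self, rpow_zero, rpow_one]
    ring
  refine ((hasDerivAt_iff_tendsto_slope.mp hderiv).mono_left
    (nhdsWithin_mono _ fun p hp => ne_of_gt hp)).congr fun p => ?_
  simp [slope_def_field]

lemma tendsto_slope_rpow_integral (hg0 : ∀ x, 0 ≤ g x) (hgm : Measurable g)
    (hgC : ∀ x, g x ≤ C) :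
    Tendsto (fun p => ((∫ x, g x ^ p ∂μ) ^ (1 / p) - ∫ x, g x ∂μ) / (p - 1)) (𝓝[>] 1)
      (𝓝 (∫ x, g x * log (g x) ∂μ - (∫ x, g x ∂μ) * log (∫ x, g x ∂μ))) := by
  have hL0 : 0 ≤ ∫ x, g x ∂μ := integral_nonneg hg0
  rcases hL0.eq_or_lt with hzero | hpos
  · have hg : g =ᵐ[μ] 0 := (integral_eq_zero_iff_of_nonneg hg0
      (Integrable.of_bound hgm.aestronglyMeasurable C
        (Eventually.of_forall fun x => by simpa [abs_of_nonneg (hg0 x)] using hgC x))).mp hzero.symm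
    have hrpow : ∀ p : ℝ, 0 < p → ∫ x, g x ^ p ∂μ = 0 := fun p hp =>
      integral_eq_zero_of_ae (hg.mono fun x hx => by simp [hx, zero_rpow hp.ne'])
    have hlog : ∫ x, g x * log (g x) ∂μ = 0 :=
      integral_eq_zero_of_ae (hg.mono fun x hx => by simp [hx])
    rw [← hzero, hlog]
    refine tendsto_const_nhds.congr' ?_
    filter_upwards [self_mem_nhdsWithin] with p (hp : 1 < p)
    simp [hrpow p (by linarith), zero_rpow (inv_ne_zero (by positivity : p ≠ 0))]
  · exact tendsto_slope_rpow_integral_of_pos hg0 hgm hgC hpos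

end RpowIntegral

noncomputable def gaussMeasure : Measure ℝ :=
  volume.withDensity fun x => ENNReal.ofReal (exp (-π * x ^ 2))

lemma integral_gaussMeasure (f : ℝ → ℝ) :
    ∫ x, f x ∂gaussMeasure = ∫ x, f x * exp (-π * x ^ 2) := by
  rw [gaussMeasure, integral_withDensity_eq_integral_toReal_smul (by fun_prop)
    (Eventually.of_forall fun _ => ENNReal.ofReal_lt_top)]
  simp [ENNReal.toReal_ofReal (exp_pos _).le, mul_comm]

instance : IsProbabilityMeasure gaussMeasure := by
  constructor
  rw [gaussMeasure, withDensity_apply _ MeasurableSet.univ, Measure.restrict_univ,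
    ← ofReal_integral_eq_lintegral_ofReal (integrable_exp_neg_mul_sq pi_pos)
      (Eventually.of_forall fun _ => (exp_pos _).le),
    integral_gaussian, div_self pi_ne_zero, sqrt_one, ENNReal.ofReal_one]

lemma tendsto_slope_gaussLpNorm {g : ℝ → ℝ} {C : ℝ} (hg0 : ∀ x, 0 ≤ g x) (hgm : Measurable g)
    (hgC : ∀ x, g x ≤ C) :
    Tendsto (fun p => (gaussLpNorm g p - gaussL1Norm g) / (p - 1)) (𝓝[>] 1)
      (𝓝 ((∫ x, g x * log (g x) * exp (-π * x ^ 2)) - gaussL1Norm g * log (gaussL1Norm g))) := by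
  simpa only [gaussLpNorm, gaussL1Norm, integral_gaussMeasure]
    using tendsto_slope_rpow_integral (μ := gaussMeasure) hg0 hgm hgC

section OUsemigroup

variable {t : ℝ} {h : ℝ → ℝ}

lemma OUsemigroup_eq_integral (x : ℝ) :
    OUsemigroup t h x = ∫ y, h (exp (-t) * x + √(1 - exp (-2 * t)) * y) ∂gaussMeasure :=
  (integral_gaussMeasure _).symm

lemma measurable_OUsemigroup (hm : Measurable h) : Measurable (OUsemigroup t h) := by
  rw [show OUsemigroup t h = _ from funext OUsemigroup_eq_integral]
  exact (StronglyMeasurable.integral_prod_right' (ν := gaussMeasure)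
    (f := fun z : ℝ × ℝ => h (exp (-t) * z.1 + √(1 - exp (-2 * t)) * z.2))
    (hm.comp (by fun_prop)).stronglyMeasurable).measurable

lemma OUsemigroup_nonneg (h0 : ∀ x, 0 ≤ h x) (x : ℝ) : 0 ≤ OUsemigroup t h x := by
  rw [OUsemigroup_eq_integral]
  exact integral_nonneg fun y => h0 _

lemma OUsemigroup_le {C : ℝ} (h0 : ∀ x, 0 ≤ h x) (hm : Measurable h) (hC : ∀ x, h x ≤ C)
    (x : ℝ) : OUsemigroup t h x ≤ C := by
  rw [OUsemigroup_eq_integral]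
  calc ∫ y, h (exp (-t) * x + √(1 - exp (-2 * t)) * y) ∂gaussMeasure
      ≤ ∫ _, C ∂gaussMeasure :=
        integral_mono (Integrable.of_bound (hm.comp (by fun_prop)).aestronglyMeasurable C
          (Eventually.of_forall fun y => by simpa [abs_of_nonneg (h0 _)] using hC _))
          (integrable_const C) fun y => hC _
    _ = C := by simp

lemma OUsemigroup_zero : OUsemigroup 0 h = h := by
  funext x
  simp [OUsemigroup_eq_integral]

end OUsemigroup

lemma tendsto_one_add_mul_sub_one {c : ℝ} (hc : 0 < c) :
    Tendsto (fun p => 1 + c * (p - 1)) (𝓝[>] 1) (𝓝[>] 1) := by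
  refine tendsto_nhdsWithin_of_tendsto_nhds_of_eventually_within _ ?_ ?_
  · exact ((by fun_prop : Continuous fun p : ℝ => 1 + c * (p - 1)).tendsto' 1 1
      (by simp)).mono_left nhdsWithin_le_nhds
  · filter_upwards [self_mem_nhdsWithin] with p (hp : 1 < p)
    exact lt_add_of_pos_right 1 (mul_pos hc (sub_pos.mpr hp))

theorem nelson_implies_entropy_decay_general
    (t : ℝ) (ht : 0 ≤ t)
    (h : ℝ → ℝ) (hh_nonneg : ∀ x, 0 ≤ h x) (hh_meas : Measurable h)
    (hh_bdd : ∃ C : ℝ, ∀ x, h x ≤ C)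
    (hNelson : ∀ p q : ℝ, 1 < p → p < q → p - 1 = Real.exp (-2 * t) * (q - 1) →
      gaussLpNorm (OUsemigroup t h) q ≤ gaussLpNorm h p)
    (hL1 : gaussL1Norm (OUsemigroup t h) = gaussL1Norm h) :
    (∀ p q : ℝ, 1 < p → p < q → p - 1 = Real.exp (-2 * t) * (q - 1) →
      (gaussLpNorm (OUsemigroup t h) q - gaussL1Norm h) / (q - 1)
        ≤ Real.exp (-2 * t) * ((gaussLpNorm h p - gaussL1Norm h) / (p - 1))) ∧
    (∫ x : ℝ, OUsemigroup t h x * Real.log (OUsemigroup t h x) * Real.exp (-π * x ^ 2))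
      ≤ Real.exp (-2 * t) * (∫ x : ℝ, h x * Real.log (h x) * Real.exp (-π * x ^ 2))
        + (1 - Real.exp (-2 * t)) * gaussL1Norm h * Real.log (gaussL1Norm h) := by
  obtain ⟨C, hC⟩ := hh_bdd
  have hquot : ∀ p q : ℝ, 1 < p → p < q → p - 1 = exp (-2 * t) * (q - 1) →
      (gaussLpNorm (OUsemigroup t h) q - gaussL1Norm h) / (q - 1)
        ≤ exp (-2 * t) * ((gaussLpNorm h p - gaussL1Norm h) / (p - 1)) := by
    intro p q hp hpq hpq'
    calc (gaussLpNorm (OUsemigroup t h) q - gaussL1Norm h) / (q - 1)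
        ≤ (gaussLpNorm h p - gaussL1Norm h) / (q - 1) := by
          gcongr
          · linarith
          · exact hNelson p q hp hpq hpq'
      _ = exp (-2 * t) * ((gaussLpNorm h p - gaussL1Norm h) / (p - 1)) := by
          rw [hpq']
          field_simp
  refine ⟨hquot, ?_⟩
  rcases ht.eq_or_lt with rfl | ht
  · simp [OUsemigroup_zero]
  have hq := tendsto_one_add_mul_sub_one (exp_pos (2 * t))
  have hlim := le_of_tendsto_of_tendsto
    ((hL1 ▸ tendsto_slope_gaussLpNorm (OUsemigroup_nonneg hh_nonneg)
      (measurable_OUsemigroup hh_meas) (OUsemigroup_le hh_nonneg hh_meas hC)).comp hq)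
    ((tendsto_slope_gaussLpNorm hh_nonneg hh_meas hC).const_mul (exp (-2 * t)))
    (eventually_nhdsWithin_of_forall fun p (hp : 1 < p) => hquot p _ hp
      (by nlinarith [one_lt_exp_iff.mpr (by linarith : 0 < 2 * t)])
      (by rw [add_sub_cancel_left, ← mul_assoc, ← exp_add]; simp))
  linear_combination hlim

/-- Assuming Nelson's hypercontractive inequality
`‖N_t h‖_q ≤ ‖h‖_p` for `(p-1) = e^{-2t}(q-1)`, `1 < p < q`, and `‖N_t h‖₁ = ‖h‖₁`,
one has the difference-quotient inequality
`(‖N_t h‖_q − ‖h‖₁)/(q−1) ≤ e^{-2t}(‖h‖_p − ‖h‖₁)/(p−1)`, and in the limit `p,q → 1`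
the entropic inequality
`∫ N_t h log N_t h dγ ≤ e^{-2t} ∫ h log h dγ + (1−e^{-2t})‖h‖₁ log ‖h‖₁`,
provided `h` is bounded. -/
theorem nelson_implies_entropy_decay
    (t : ℝ) (ht : 0 ≤ t)
    (h : ℝ → ℝ) (hh_nonneg : ∀ x, 0 ≤ h x) (hh_meas : Measurable h)
    (hh_bdd : ∃ C : ℝ, ∀ x, h x ≤ C)
    (hh_int : Integrable (fun x => h x * Real.exp (-π * x ^ 2)))
    (hNelson : ∀ p q : ℝ, 1 < p → p < q → p - 1 = Real.exp (-2 * t) * (q - 1) →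
      gaussLpNorm (OUsemigroup t h) q ≤ gaussLpNorm h p)
    (hL1 : gaussL1Norm (OUsemigroup t h) = gaussL1Norm h) :
    (∀ p q : ℝ, 1 < p → p < q → p - 1 = Real.exp (-2 * t) * (q - 1) →
      (gaussLpNorm (OUsemigroup t h) q - gaussL1Norm h) / (q - 1)
        ≤ Real.exp (-2 * t) * ((gaussLpNorm h p - gaussL1Norm h) / (p - 1))) ∧
    (∫ x : ℝ, OUsemigroup t h x * Real.log (OUsemigroup t h x) * Real.exp (-π * x ^ 2))
      ≤ Real.exp (-2 * t) * (∫ x : ℝ, h x * Real.log (h x) * Real.exp (-π * x ^ 2))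
        + (1 - Real.exp (-2 * t)) * gaussL1Norm h * Real.log (gaussL1Norm h) :=
  nelson_implies_entropy_decay_general t ht h hh_nonneg hh_meas hh_bdd hNelson hL1
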